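/- Visible excess is monotone: if P ⊆ Q are finite subsets of G, then the maximal cardinality of an excess set of P is at most the maximal cardinality of an excess set of Q. -/

import Mathlib

/-! The closure is monotone and a finite set inside `φ(B)` has closure inside `φ(B)`, both because
a filling chain from `A` can be replayed from any `W ⊇ A`: a move at `g` either is available from
`W` too (the translate `gS` still meets `W` in `|S| - 1` points unless it already lies in `W`) or
is unnecessary (`gC ⊆ gS ⊆ W`). Hence an excess set `R` of `P ⊆ Q` is also one of `Q`: every point
of `R` lies in `φ(P \ R) ⊆ φ(Q \ R)`, so `Q ⊆ φ(Q \ R)` and `φ(Q) ⊆ φ(Q \ R)`. -/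

open scoped symmDiff

/-- The left translate `gS` of a finite shape `S` in a group `G`. -/
def gset {G : Type*} [Group G] (g : G) (S : Finset G) : Set G :=
  (fun s => g * s) '' (S : Set G)

/-- A `(C,S)`-filling move: `P ⊊ Q`, some translate `gS` meets `P` in exactly
`|S| - 1` elements, and `Q = P ∪ gC`. -/
def FillMove {G : Type*} [Group G] (C S : Finset G) (P Q : Set G) : Prop :=
  P ⊂ Q ∧ ∃ g : G, (P ∩ gset g S).ncard = S.card - 1 ∧ Q = P ∪ gset g C

/-- The `(C,S)`-filling closure: the union of all sets reachable from `P` by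
finitely many filling moves. -/
def fillClosure {G : Type*} [Group G] (C S : Finset G) (P : Set G) : Set G :=
  {x | ∃ Q : Set G, Relation.ReflTransGen (FillMove C S) P Q ∧ x ∈ Q}


/-- `Q` is an excess set of the finite pattern `P` if removing it does not change
the filling closure. -/
def ExcessSet {G : Type*} [Group G] (C S : Finset G) (P Q : Finset G) : Prop :=
  Q ⊆ P ∧ fillClosure C S ((P : Set G) \ (Q : Set G)) = fillClosure C S (P : Set G)

/-- The visible excess of a pattern: the maximal cardinality of an excess set. -/
noncomputable def visibleExcess {G : Type*} [Group G] (C S : Finset G) (P : Finset G) : ℕ :=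
  sSup {n : ℕ | ∃ Q : Finset G, ExcessSet C S P Q ∧ Q.card = n}

section FillClosure

variable {G : Type*} [Group G] {C S : Finset G}

lemma gset_finite (g : G) (S : Finset G) : (gset g S).Finite :=
  S.finite_toSet.image _

lemma ncard_gset (g : G) (S : Finset G) : (gset g S).ncard = S.card := by
  rw [gset, Set.ncard_image_of_injective _ (mul_right_injective g), Set.ncard_coe_finset]

lemma gset_subset_gset (g : G) (hCS : C ⊆ S) : gset g C ⊆ gset g S :=
  Set.image_mono (by exact_mod_cast hCS)

lemma subset_of_reflTransGen_fillMove {A A' : Set G}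
    (h : Relation.ReflTransGen (FillMove C S) A A') : A ⊆ A' := by
  induction h with
  | refl => exact subset_rfl
  | tail _ hmove ih => exact ih.trans hmove.1.subset

lemma reflTransGen_fillMove_union_gset (hCS : C ⊆ S) {A W : Set G} {g : G}
    (hA : (A ∩ gset g S).ncard = S.card - 1) (hAW : A ∩ gset g S ⊆ W) :
    Relation.ReflTransGen (FillMove C S) W (W ∪ gset g C) := by
  by_cases hC : gset g C ⊆ W
  · rw [Set.union_eq_self_of_subset_right hC]
  obtain ⟨c, hcC, hcW⟩ := Set.not_subset.1 hC
  have hle : (W ∩ gset g S).ncard ≤ S.card - 1 := by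
    calc (W ∩ gset g S).ncard ≤ (gset g S \ {c}).ncard :=
          Set.ncard_le_ncard (fun x hx => ⟨hx.2, fun hxc => hcW (hxc ▸ hx.1)⟩)
            (gset_finite g S).sdiff
      _ = S.card - 1 := by
          rw [Set.ncard_sdiff_singleton_of_mem (gset_subset_gset g hCS hcC), ncard_gset]
  have hge : S.card - 1 ≤ (W ∩ gset g S).ncard :=
    hA ▸ Set.ncard_le_ncard (fun x hx => ⟨hAW hx, hx.2⟩) ((gset_finite g S).inter_of_right _)
  exact .single ⟨Set.ssubset_union_left_iff.2 hC, g, le_antisymm hle hge, rfl⟩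

lemma exists_reflTransGen_fillMove_superset (hCS : C ⊆ S) {A A' W : Set G}
    (h : Relation.ReflTransGen (FillMove C S) A A') (hAW : A ⊆ W) :
    ∃ W', Relation.ReflTransGen (FillMove C S) W W' ∧ A' ⊆ W' := by
  induction h with
  | refl => exact ⟨W, .refl, hAW⟩
  | tail _ hmove ih =>
    obtain ⟨W', hWW', hsub⟩ := ih
    obtain ⟨-, g, hg, rfl⟩ := hmove
    exact ⟨W' ∪ gset g C,
      hWW'.trans (reflTransGen_fillMove_union_gset hCS hg fun x hx => hsub hx.1),
      Set.union_subset_union_left _ hsub⟩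

lemma fillClosure_subset_fillClosure (hCS : C ⊆ S) {A B : Set G} (h : A ⊆ B) :
    fillClosure C S A ⊆ fillClosure C S B := by
  rintro x ⟨A', hA', hx⟩
  obtain ⟨W, hW, hA'W⟩ := exists_reflTransGen_fillMove_superset hCS hA' h
  exact ⟨W, hW, hA'W hx⟩

lemma subset_fillClosure (C S : Finset G) (B : Set G) : B ⊆ fillClosure C S B :=
  fun _ hx => ⟨B, .refl, hx⟩

lemma exists_reflTransGen_fillMove_superset_union (hCS : C ⊆ S) {B W₁ W₂ : Set G}
    (h₁ : Relation.ReflTransGen (FillMove C S) B W₁)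
    (h₂ : Relation.ReflTransGen (FillMove C S) B W₂) :
    ∃ W, Relation.ReflTransGen (FillMove C S) B W ∧ W₁ ∪ W₂ ⊆ W := by
  obtain ⟨W, hW, hW₂⟩ :=
    exists_reflTransGen_fillMove_superset hCS h₂ (subset_of_reflTransGen_fillMove h₁)
  exact ⟨W, h₁.trans hW, Set.union_subset (subset_of_reflTransGen_fillMove hW) hW₂⟩

lemma exists_reflTransGen_fillMove_of_finset_subset (hCS : C ⊆ S) {B : Set G} (T : Finset G)
    (hT : (T : Set G) ⊆ fillClosure C S B) :
    ∃ W, Relation.ReflTransGen (FillMove C S) B W ∧ (T : Set G) ⊆ W := by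
  classical
  induction T using Finset.induction_on with
  | empty => exact ⟨B, .refl, by simp⟩
  | insert a T _ ih =>
    rw [Finset.coe_insert, Set.insert_subset_iff] at hT
    obtain ⟨W₁, hW₁, ha⟩ := hT.1
    obtain ⟨W₂, hW₂, hTW₂⟩ := ih hT.2
    obtain ⟨W, hW, hsub⟩ := exists_reflTransGen_fillMove_superset_union hCS hW₁ hW₂
    rw [Finset.coe_insert]
    exact ⟨W, hW, Set.insert_subset (hsub (.inl ha)) fun x hx => hsub (.inr (hTW₂ hx))⟩

lemma fillClosure_subset_of_finset_subset (hCS : C ⊆ S) {B : Set G} (T : Finset G)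
    (hT : (T : Set G) ⊆ fillClosure C S B) :
    fillClosure C S T ⊆ fillClosure C S B := by
  obtain ⟨W, hBW, hTW⟩ := exists_reflTransGen_fillMove_of_finset_subset hCS T hT
  rintro x ⟨T', hT', hx⟩
  obtain ⟨W', hWW', hT'W'⟩ := exists_reflTransGen_fillMove_superset hCS hT' hTW
  exact ⟨W', hBW.trans hWW', hT'W' hx⟩

end FillClosure

lemma excessSet_empty {G : Type*} [Group G] (C S P : Finset G) : ExcessSet C S P ∅ :=
  ⟨Finset.empty_subset P, by simp⟩

lemma ExcessSet.mono {G : Type*} [Group G] {C S P Q R : Finset G} (hCS : C ⊆ S)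
    (hR : ExcessSet C S P R) (hPQ : P ⊆ Q) : ExcessSet C S Q R := by
  obtain ⟨hRP, hclosure⟩ := hR
  have hPQ' : (P : Set G) ⊆ Q := by exact_mod_cast hPQ
  refine ⟨hRP.trans hPQ, (fillClosure_subset_fillClosure hCS Set.sdiff_subset).antisymm
    (fillClosure_subset_of_finset_subset hCS Q fun q hq => ?_)⟩
  by_cases hqR : q ∈ (R : Set G)
  · have hqP : q ∈ fillClosure C S ((P : Set G) \ R) :=
      hclosure ▸ subset_fillClosure C S _ (hRP hqR)
    exact fillClosure_subset_fillClosure hCS (Set.sdiff_subset_sdiff_left hPQ') hqP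
  · exact subset_fillClosure C S _ ⟨hq, hqR⟩

/-- Visible excess is monotone: if `P ⊆ Q` then `Ê(P) ≤ Ê(Q)`. -/
theorem visibleExcess_monotone {G : Type*} [Group G] (C S : Finset G) (hCS : C ⊆ S)
    (P Q : Finset G) (hPQ : P ⊆ Q) :
    visibleExcess C S P ≤ visibleExcess C S Q := by
  refine csSup_le_csSup ⟨Q.card, ?_⟩ ⟨0, ∅, excessSet_empty C S P, rfl⟩ ?_
  · rintro n ⟨R, hR, rfl⟩
    exact Finset.card_le_card hR.1
  · rintro n ⟨R, hR, rfl⟩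
    exact ⟨R, hR.mono hCS hPQ, rfl⟩
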